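/- Let (f_1, …, f_10) be a 10-tuple of vectors in E₁₀ such that ⟨f_i, f_j⟩ = 1 − δ_ij for all i, j. Then for every vector v ∈ E₁₀, the integer ⟨v, f_1 + f_2 + ⋯ + f_10⟩ is divisible by 3. (Corollary 2.5, first part.) -/

import Mathlib

/-!
Let `F` be the matrix with rows `f i` and `G` the Gram matrix of `E₁₀`. Then `F G Fᵀ = J - I`,
whose determinant is `-9`, and `G` is unimodular, so `det F = ±3`. By the adjugate, `det F • v` is
an integral combination of the `f i`, each of which pairs with `s = ∑ f i` to `9`; hence
`±3 ⟨v, s⟩ ∈ 9ℤ`.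
-/

open Matrix BigOperators

/-- The Gram matrix of the even unimodular hyperbolic lattice `E₁₀ = U ⊕ E₈(−1)`:
indices 0,1 span the hyperbolic plane `U`, and indices 2,…,9 carry the negative
definite `E₈` form (diagonal `−2`, entry `1` for vertices adjacent in the `E₈`
Dynkin diagram). -/
def E10Gram : Matrix (Fin 10) (Fin 10) ℤ :=
  !![0, 1,  0,  0,  0,  0,  0,  0,  0,  0;
     1, 0,  0,  0,  0,  0,  0,  0,  0,  0;
     0, 0, -2,  1,  0,  0,  0,  0,  0,  0;
     0, 0,  1, -2,  1,  0,  0,  0,  0,  0;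
     0, 0,  0,  1, -2,  1,  0,  0,  0,  1;
     0, 0,  0,  0,  1, -2,  1,  0,  0,  0;
     0, 0,  0,  0,  0,  1, -2,  1,  0,  0;
     0, 0,  0,  0,  0,  0,  1, -2,  1,  0;
     0, 0,  0,  0,  0,  0,  0,  1, -2,  0;
     0, 0,  0,  0,  1,  0,  0,  0,  0, -2]

/-- The symmetric bilinear form on `E₁₀ = ℤ¹⁰` with Gram matrix `E10Gram`. -/
def E10Pair (v w : Fin 10 → ℤ) : ℤ := ∑ i, ∑ j, v i * E10Gram i j * w j

namespace Matrix

variable {n R : Type*} [Fintype n] [CommRing R]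

theorem mul_mul_transpose_apply (F G : Matrix n n R) (i j : n) :
    (F * G * Fᵀ) i j = F i ⬝ᵥ (G *ᵥ F j) := by
  simp only [mul_apply, transpose_apply, dotProduct, mulVec, Finset.mul_sum, Finset.sum_mul,
    mul_assoc]
  exact Finset.sum_comm

variable [DecidableEq n]

theorem det_of_const_one_sub_one :
    (of (fun _ _ => (1 : R)) - 1 : Matrix n n R).det =
      (-1) ^ Fintype.card n * (1 - Fintype.card n) := by
  have h : (of (fun _ _ => (1 : R)) - 1 : Matrix n n R) = -(1 + vecMulVec (-1) 1) := by
    ext i j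
    simp only [sub_apply, of_apply, neg_apply, add_apply, vecMulVec_apply, Pi.neg_apply,
      Pi.one_apply]
    ring
  rw [h, det_neg, vecMulVec_eq Unit, det_one_add_replicateCol_mul_replicateRow]
  simp [sub_eq_add_neg]

theorem of_const_one_sub_one_mulVec_one :
    (of (fun _ _ => (1 : R)) - 1 : Matrix n n R) *ᵥ 1 = (Fintype.card n - 1 : R) • 1 := by
  rw [sub_mulVec, one_mulVec]
  ext i
  simp [mulVec, dotProduct]

/- The adjugate writes `det F • v` as the combination `u ᵥ* F` of the rows of `F`, and each row
of `F` pairs with `1 ᵥ* F` to `c`. -/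
theorem dvd_det_mul_dotProduct_mulVec_one_vecMul (F G : Matrix n n R) {c : R}
    (hc : (F * G * Fᵀ) *ᵥ 1 = c • 1) (v : n → R) :
    c ∣ F.det * (v ⬝ᵥ (G *ᵥ (1 ᵥ* F))) := by
  set u := (adjugate F)ᵀ *ᵥ v
  have hv : F.det • v = u ᵥ* F := by
    rw [← mulVec_transpose, mulVec_mulVec, ← transpose_mul, adjugate_mul, transpose_smul,
      transpose_one, smul_mulVec, one_mulVec]
  have key : F.det * (v ⬝ᵥ (G *ᵥ (1 ᵥ* F))) = c * ∑ i, u i := by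
    calc F.det * (v ⬝ᵥ (G *ᵥ (1 ᵥ* F)))
        = (u ᵥ* F) ⬝ᵥ (G *ᵥ (1 ᵥ* F)) := by rw [← hv, smul_dotProduct, smul_eq_mul]
      _ = u ⬝ᵥ ((F * G * Fᵀ) *ᵥ 1) := by
        rw [← dotProduct_mulVec, ← mulVec_transpose, mulVec_mulVec, mulVec_mulVec]
      _ = c * ∑ i, u i := by simp [hc, dotProduct, Finset.mul_sum, mul_comm]
  exact key ▸ dvd_mul_right _ _

end Matrix

def E10Inv : Matrix (Fin 10) (Fin 10) ℤ :=
  !![0, 1,  0,  0,  0,  0,  0,  0,  0,  0;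
     1, 0,  0,  0,  0,  0,  0,  0,  0,  0;
     0, 0, -4, -7, -10, -8, -6, -4, -2, -5;
     0, 0, -7, -14, -20, -16, -12, -8, -4, -10;
     0, 0, -10, -20, -30, -24, -18, -12, -6, -15;
     0, 0, -8, -16, -24, -20, -15, -10, -5, -12;
     0, 0, -6, -12, -18, -15, -12, -8, -4, -9;
     0, 0, -4, -8, -12, -10, -8, -6, -3, -6;
     0, 0, -2, -4, -6, -5, -4, -3, -2, -3;
     0, 0, -5, -10, -15, -12, -9, -6, -3, -8]

theorem E10Gram_mul_E10Inv : E10Gram * E10Inv = 1 := by decide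

theorem E10Pair_eq_dotProduct (v w : Fin 10 → ℤ) : E10Pair v w = v ⬝ᵥ (E10Gram *ᵥ w) := by
  simp only [E10Pair, dotProduct, mulVec, Finset.mul_sum, mul_assoc]

theorem det_eq_three_or_eq_neg_three_of_mul_E10Gram_mul_transpose
    {F : Matrix (Fin 10) (Fin 10) ℤ} (hF : F * E10Gram * Fᵀ = of (fun _ _ => 1) - 1) :
    F.det = 3 ∨ F.det = -3 := by
  have hdet : F.det ^ 2 * E10Gram.det = -9 := by
    have := congrArg det hF
    rw [det_mul, det_mul, det_transpose, det_of_const_one_sub_one] at this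
    norm_num at this
    linear_combination this
  have hsq : F.det ^ 2 = 3 ^ 2 := by
    rcases Int.isUnit_iff.mp (isUnit_det_of_right_inverse E10Gram_mul_E10Inv) with h | h <;>
      rw [h] at hdet <;> nlinarith [sq_nonneg F.det]
  exact sq_eq_sq_iff_eq_or_eq_neg.mp hsq

/-- If `(f 0, …, f 9)` is a 10-tuple of vectors of `E₁₀` with `⟨f i, f j⟩ = 1 − δ_ij`,
then for every `v ∈ E₁₀` the integer `⟨v, f 0 + ⋯ + f 9⟩` is divisible by `3`. -/
theorem div_three (f : Fin 10 → Fin 10 → ℤ)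
    (hf : ∀ i j, E10Pair (f i) (f j) = 1 - if i = j then 1 else 0)
    (v : Fin 10 → ℤ) :
    (3 : ℤ) ∣ E10Pair v (∑ i, f i) := by
  set F : Matrix (Fin 10) (Fin 10) ℤ := of f
  have hgram : F * E10Gram * Fᵀ = of (fun _ _ => 1) - 1 := by
    ext i j
    rw [mul_mul_transpose_apply, Matrix.sub_apply, of_apply, one_apply, ← hf,
      E10Pair_eq_dotProduct]
    rfl
  have h9 : (9 : ℤ) ∣ F.det * E10Pair v (∑ i, f i) := by
    rw [E10Pair_eq_dotProduct, show ∑ i, f i = 1 ᵥ* F from (one_vecMul F).symm]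
    refine dvd_det_mul_dotProduct_mulVec_one_vecMul F E10Gram ?_ v
    rw [hgram, of_const_one_sub_one_mulVec_one]
    norm_num
  rcases det_eq_three_or_eq_neg_three_of_mul_E10Gram_mul_transpose hgram with h | h <;>
    rw [h] at h9 <;> omega
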